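/- Let F : U ⊆ ℝⁿ → ℝᵐ (m ≥ n ≥ 2) be continuously differentiable, pointwise monotonic (F'(x) ≥ 0 entrywise) and pointwise convex (F(y) − F(x) ≥ F'(x)(y−x)) on a convex open set U, and let L > 0. If both x, y ∈ U satisfy max_{k=1,…,m} eₖᵀ F'(z)(eⱼ − eⱼ') ≥ L⁻¹ for all j ∈ {1,…,n} (with z = x and z = y), then ‖x − y‖_∞ ≤ L ‖F(x) − F(y)‖_∞. -/

import Mathlib

/-!
If `d := x - y` attains its sup norm at a coordinate `j` with `d j = ‖d‖`, then
`‖d‖ (eⱼ - eⱼ') ≤ d` entrywise. Applying the nonnegative matrix `F'(y)` and convexity,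
`‖d‖ · F'(y)(eⱼ - eⱼ') ≤ F'(y) d ≤ F x - F y`, and the row where `F'(y)(eⱼ - eⱼ')` is
at least `L⁻¹` gives `‖d‖ ≤ L ‖F x - F y‖`. If instead `d j = -‖d‖`, exchange `x` and `y`.
-/

open Matrix

lemma exists_abs_apply_eq_norm {ι : Type*} [Fintype ι] [Nonempty ι] (d : ι → ℝ) :
    ∃ j, |d j| = ‖d‖ := by
  obtain ⟨j, hj⟩ := Finite.exists_max fun i => |d i|
  refine ⟨j, le_antisymm ?_ ?_⟩
  · simpa only [Real.norm_eq_abs] using norm_le_pi_norm d j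
  · exact (pi_norm_le_iff_of_nonneg (abs_nonneg _)).mpr fun i => hj i

lemma norm_smul_sign_le {ι : Type*} [Fintype ι] [DecidableEq ι] {d : ι → ℝ} {j : ι}
    (hj : d j = ‖d‖) : ‖d‖ • (fun i => if i = j then (1 : ℝ) else -1) ≤ d := by
  intro i
  by_cases hij : i = j
  · simp [hij, hj]
  · have hi : |d i| ≤ ‖d‖ := by simpa only [Real.norm_eq_abs] using norm_le_pi_norm d i
    simpa [hij] using neg_le_of_abs_le hi

lemma mulVec_mono_of_nonneg {R ι κ : Type*} [Semiring R] [PartialOrder R] [IsOrderedRing R]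
    [Fintype ι] {M : Matrix κ ι R} (hM : ∀ k i, 0 ≤ M k i) {u v : ι → R} (huv : u ≤ v) :
    M *ᵥ u ≤ M *ᵥ v :=
  fun k => dotProduct_le_dotProduct_of_nonneg_left huv (hM k)

lemma norm_le_of_mulVec_le {ι κ : Type*} [Fintype ι] [Fintype κ] [DecidableEq ι]
    {M : Matrix κ ι ℝ} (hM : ∀ k i, 0 ≤ M k i) {d : ι → ℝ} {w : κ → ℝ} (hdw : M *ᵥ d ≤ w)
    {j : ι} (hj : d j = ‖d‖) {L : ℝ} (hL : 0 < L)
    (hcrit : L⁻¹ ≤ ⨆ k, (M *ᵥ fun i => if i = j then 1 else -1) k) :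
    ‖d‖ ≤ L * ‖w‖ := by
  have hsign : ‖d‖ • (M *ᵥ fun i => if i = j then 1 else -1) ≤ w := by
    rw [← mulVec_smul]
    exact (mulVec_mono_of_nonneg hM (norm_smul_sign_le hj)).trans hdw
  have hsup : ‖d‖ * ⨆ k, (M *ᵥ fun i => if i = j then 1 else -1) k ≤ ‖w‖ := by
    rw [Real.mul_iSup_of_nonneg (norm_nonneg d)]
    refine Real.iSup_le (fun k => (hsign k).trans ?_) (norm_nonneg w)
    have hk : |w k| ≤ ‖w‖ := by simpa only [Real.norm_eq_abs] using norm_le_pi_norm w k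
    exact (le_abs_self _).trans hk
  have : ‖d‖ * L⁻¹ ≤ ‖w‖ := (mul_le_mul_of_nonneg_left hcrit (norm_nonneg d)).trans hsup
  rwa [← div_eq_mul_inv, div_le_iff₀ hL, mul_comm] at this

theorem stmt_1_general (n m : ℕ)
    (U : Set (Fin n → ℝ))
    (F : (Fin n → ℝ) → (Fin m → ℝ))
    (F' : (Fin n → ℝ) → Matrix (Fin m) (Fin n) ℝ)
    (hmono : ∀ z ∈ U, ∀ k j, 0 ≤ F' z k j)
    (hconv : ∀ z ∈ U, ∀ w ∈ U, (F' z).mulVec (w - z) ≤ F w - F z)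
    (L : ℝ) (hL : 0 < L)
    (x : Fin n → ℝ) (hx : x ∈ U) (y : Fin n → ℝ) (hy : y ∈ U)
    (hcritx : ∀ j : Fin n,
      L⁻¹ ≤ ⨆ k, ((F' x).mulVec (fun i => if i = j then 1 else -1)) k)
    (hcrity : ∀ j : Fin n,
      L⁻¹ ≤ ⨆ k, ((F' y).mulVec (fun i => if i = j then 1 else -1)) k) :
    ‖x - y‖ ≤ L * ‖F x - F y‖ := by
  rcases isEmpty_or_nonempty (Fin n) with _ | _
  · simp only [Subsingleton.elim (x - y) 0, norm_zero]
    positivity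
  obtain ⟨j, hj⟩ := exists_abs_apply_eq_norm (x - y)
  rcases abs_choice ((x - y) j) with hpos | hneg
  · exact norm_le_of_mulVec_le (hmono y hy) (hconv y hy x hx) (hpos ▸ hj) hL (hcrity j)
  · rw [norm_sub_rev x, norm_sub_rev (F x)]
    refine norm_le_of_mulVec_le (hmono x hx) (hconv x hx y hy) ?_ hL (hcritx j)
    rw [norm_sub_rev, ← hj, hneg, Pi.sub_apply, Pi.sub_apply, neg_sub]

theorem stmt_1 (n m : ℕ) (hn : 2 ≤ n) (hnm : n ≤ m)
    (U : Set (Fin n → ℝ)) (hUopen : IsOpen U) (hUconv : Convex ℝ U)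
    (F : (Fin n → ℝ) → (Fin m → ℝ))
    (F' : (Fin n → ℝ) → Matrix (Fin m) (Fin n) ℝ)
    (hderiv : ∀ z ∈ U, HasFDerivAt F ((F' z).mulVecLin.toContinuousLinearMap) z)
    (hcont : ContinuousOn F' U)
    (hmono : ∀ z ∈ U, ∀ k j, 0 ≤ F' z k j)
    (hconv : ∀ z ∈ U, ∀ w ∈ U, (F' z).mulVec (w - z) ≤ F w - F z)
    (L : ℝ) (hL : 0 < L)
    (x : Fin n → ℝ) (hx : x ∈ U) (y : Fin n → ℝ) (hy : y ∈ U)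
    (hcritx : ∀ j : Fin n,
      L⁻¹ ≤ ⨆ k, ((F' x).mulVec (fun i => if i = j then 1 else -1)) k)
    (hcrity : ∀ j : Fin n,
      L⁻¹ ≤ ⨆ k, ((F' y).mulVec (fun i => if i = j then 1 else -1)) k) :
    ‖x - y‖ ≤ L * ‖F x - F y‖ :=
  stmt_1_general n m U F F' hmono hconv L hL x hx y hy hcritx hcrity
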